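/- Uniform comparison of two coupled Riccati recursion trajectories (Claim 1): assume that for every n ∈ {1,…,N} there exists m with p̃_{mn} > 0. Let (Ỹ_n(k))_{n=1,…,N, k∈ℕ} and (Ỹ'_n(k))_{n=1,…,N, k∈ℕ} be two solutions of the recursion Ỹ_n(k+1) = Σ_{m=1}^N p̃_{mn} 𝒳_λ(Ỹ_m(k), α_m(k), γ̃_m), each with positive semidefinite symmetric initial N-tuples. Then there exists a constant β > 1 such that β Ỹ_m(k) ⪰ Ỹ'_m(k) for all m = 1,…,N and all k ≥ 1. -/

import Mathlib

/-!
With `c = λφ`, `𝒳_λ(X, α, φ)` is the minimum over gains `K` of the map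
`(1 - c) A X Aᵀ + c (A - K L) X (A - K L)ᵀ + α Q + c α K R Kᵀ`, which is affine in `X`; the
minimum is attained at the Kalman gain `K* = A X Lᵀ M⁻¹`, `M = L X Lᵀ + α R`, because
completing the square turns the difference into `c (K - K*) M (K - K*)ᵀ`. Hence `𝒳` is
monotone, satisfies `𝒳(b X) ⪯ b 𝒳(X)` for `b ≥ 1`, and dominates `α Q`. The last property
makes every `Ỹ_n(1)` positive definite (each column of `P̃` has a positive entry), so
`Ỹ'_n(1) ⪯ β Ỹ_n(1)` for some `β > 1`, and the first two properties carry this inequality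
through the recursion.
-/

open Matrix

/-- The Riccati-type operator 𝒳_λ(X, α, φ). -/
noncomputable def calX {nx ny : ℕ} (A : Matrix (Fin nx) (Fin nx) ℝ)
    (L : Matrix (Fin ny) (Fin nx) ℝ) (Q : Matrix (Fin nx) (Fin nx) ℝ)
    (R : Matrix (Fin ny) (Fin ny) ℝ) (lam : ℝ) (X : Matrix (Fin nx) (Fin nx) ℝ)
    (al phi : ℝ) : Matrix (Fin nx) (Fin nx) ℝ :=
  (1 - lam * phi) • (A * X * Aᵀ + al • Q) +
    (lam * phi) •
      (A * X * Aᵀ + al • Q - A * X * Lᵀ * (L * X * Lᵀ + al • R)⁻¹ * (L * X * Aᵀ))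

/-- Loewner order: `X ⪯ Y` iff `Y - X` is positive semidefinite. -/
def loewnerLE {nx : ℕ} (X Y : Matrix (Fin nx) (Fin nx) ℝ) : Prop :=
  (Y - X).PosSemidef

open scoped MatrixOrder

namespace Matrix

variable {m n : Type*}

lemma mul_mul_transpose_le_mul_mul_transpose [Fintype m] [Fintype n] (B : Matrix m n ℝ)
    {X Y : Matrix n n ℝ} (h : X ≤ Y) : B * X * Bᵀ ≤ B * Y * Bᵀ := by
  rw [le_iff] at h ⊢
  simpa [Matrix.mul_sub, Matrix.sub_mul, conjTranspose_eq_transpose_of_trivial] using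
    h.mul_mul_conjTranspose_same B

lemma mul_mul_transpose_nonneg [Fintype m] [Fintype n] (B : Matrix m n ℝ) {X : Matrix n n ℝ}
    (h : 0 ≤ X) : 0 ≤ B * X * Bᵀ := by
  simpa using mul_mul_transpose_le_mul_mul_transpose B h

lemma transpose_eq_of_nonneg [Fintype n] {X : Matrix n n ℝ} (hX : 0 ≤ X) : Xᵀ = X :=
  (isHermitian_iff_isSymm.1 (nonneg_iff_posSemidef.1 hX).isHermitian).eq

lemma PosDef.of_le [Fintype n] {X Y : Matrix n n ℝ} (hX : X.PosDef) (h : X ≤ Y) :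
    Y.PosDef := by
  simpa using hX.add_posSemidef (le_iff.1 h)

lemma sub_mul_inv_mul_mul_transpose_sub [Fintype n] [DecidableEq n] (K B : Matrix m n ℝ)
    {M : Matrix n n ℝ} (hM : IsUnit M) (hMT : Mᵀ = M) :
    (K - B * M⁻¹) * M * (K - B * M⁻¹)ᵀ = K * M * Kᵀ - K * Bᵀ - B * Kᵀ + B * M⁻¹ * Bᵀ := by
  have hdet := (isUnit_iff_isUnit_det M).mp hM
  have hMiT : M⁻¹ᵀ = M⁻¹ := by rw [transpose_nonsing_inv, hMT]
  simp only [transpose_sub, transpose_mul, hMiT, Matrix.sub_mul, Matrix.mul_sub, Matrix.mul_assoc,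
    mul_nonsing_inv_cancel_left _ _ hdet, nonsing_inv_mul _ hdet, Matrix.mul_one]
  abel

lemma PosDef.exists_le_smul [Fintype n] [DecidableEq n] {Y S : Matrix n n ℝ} (hY : Y.PosDef)
    (hS : S.IsHermitian) : ∃ t : ℝ, S ≤ t • Y := by
  rcases subsingleton_or_nontrivial (Matrix n n ℝ) with _ | _
  · exact ⟨0, (Subsingleton.elim S _).le⟩
  obtain ⟨r, hr, hrY⟩ := (CFC.exists_pos_algebraMap_le_iff hY.isHermitian).2 fun x hx =>
    (isStrictlyPositive_iff_posDef.2 hY).spectrum_pos hx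
  obtain ⟨s, hs⟩ := (ContinuousFunctionalCalculus.isCompact_spectrum (R := ℝ) S).bddAbove
  have hS1 : S ≤ algebraMap ℝ _ (max s 0) :=
    (le_algebraMap_iff_spectrum_le hS).2 fun x hx => (hs hx).trans (le_max_left s 0)
  have ht : 0 ≤ max s 0 / r := div_nonneg (le_max_right s 0) hr.le
  refine ⟨max s 0 / r, hS1.trans ?_⟩
  calc algebraMap ℝ (Matrix n n ℝ) (max s 0) = (max s 0 / r) • algebraMap ℝ _ r := by
        rw [Algebra.smul_def, ← map_mul, div_mul_cancel₀ _ hr.ne']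
    _ ≤ (max s 0 / r) • Y := smul_le_smul_of_nonneg_left hrY ht

lemma PosDef.mul_mul_transpose_add_smul [Fintype m] [Fintype n] {R : Matrix m m ℝ}
    (hR : R.PosDef) (B : Matrix m n ℝ) {X : Matrix n n ℝ} (hX : 0 ≤ X) {a : ℝ} (ha : 0 < a) :
    (B * X * Bᵀ + a • R).PosDef :=
  PosDef.posSemidef_add (nonneg_iff_posSemidef.1 (mul_mul_transpose_nonneg B hX)) (hR.smul ha)

end Matrix

section Riccati

variable {nx ny : ℕ} (A : Matrix (Fin nx) (Fin nx) ℝ) (L : Matrix (Fin ny) (Fin nx) ℝ)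
  (Q : Matrix (Fin nx) (Fin nx) ℝ) (R : Matrix (Fin ny) (Fin ny) ℝ)

/-- `𝒳` with the Kalman gain replaced by an arbitrary gain `K`; `calX` is its minimum over `K`. -/
noncomputable def calXGain (c al : ℝ) (K : Matrix (Fin nx) (Fin ny) ℝ)
    (X : Matrix (Fin nx) (Fin nx) ℝ) : Matrix (Fin nx) (Fin nx) ℝ :=
  (1 - c) • (A * X * Aᵀ) + c • ((A - K * L) * X * (A - K * L)ᵀ) + al • Q +
    (c * al) • (K * R * Kᵀ)

noncomputable def kalmanGain (al : ℝ) (X : Matrix (Fin nx) (Fin nx) ℝ) :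
    Matrix (Fin nx) (Fin ny) ℝ :=
  A * X * Lᵀ * (L * X * Lᵀ + al • R)⁻¹

variable {A L Q R} {lam phi al : ℝ}

lemma calXGain_sub_calX {X : Matrix (Fin nx) (Fin nx) ℝ} (hX : Xᵀ = X)
    (hRT : Rᵀ = R) (hM : IsUnit (L * X * Lᵀ + al • R)) (K : Matrix (Fin nx) (Fin ny) ℝ) :
    calXGain A L Q R (lam * phi) al K X - calX A L Q R lam X al phi =
      (lam * phi) • ((K - kalmanGain A L R al X) * (L * X * Lᵀ + al • R) *
        (K - kalmanGain A L R al X)ᵀ) := by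
  have hMT : (L * X * Lᵀ + al • R)ᵀ = L * X * Lᵀ + al • R := by
    simp [transpose_mul, hX, hRT, Matrix.mul_assoc]
  have hBT : (A * X * Lᵀ)ᵀ = L * X * Aᵀ := by simp [transpose_mul, hX, Matrix.mul_assoc]
  rw [kalmanGain, sub_mul_inv_mul_mul_transpose_sub K _ hM hMT, hBT, calXGain, calX]
  simp only [transpose_sub, transpose_mul, Matrix.sub_mul, Matrix.mul_sub, Matrix.add_mul,
    Matrix.mul_add, Matrix.mul_smul, Matrix.smul_mul, Matrix.mul_assoc]
  module

lemma calX_le_calXGain (hR : R.PosDef) (hc : 0 ≤ lam * phi) (hal : 0 < al)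
    {X : Matrix (Fin nx) (Fin nx) ℝ} (hX : 0 ≤ X) (K : Matrix (Fin nx) (Fin ny) ℝ) :
    calX A L Q R lam X al phi ≤ calXGain A L Q R (lam * phi) al K X := by
  have hM := hR.mul_mul_transpose_add_smul L hX hal
  rw [← sub_nonneg, calXGain_sub_calX (transpose_eq_of_nonneg hX)
    (isHermitian_iff_isSymm.1 hR.isHermitian).eq hM.isUnit]
  exact smul_nonneg hc (mul_mul_transpose_nonneg _ (nonneg_iff_posSemidef.2 hM.posSemidef))

lemma calX_eq_calXGain_kalmanGain (hR : R.PosDef) (hal : 0 < al)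
    {X : Matrix (Fin nx) (Fin nx) ℝ} (hX : 0 ≤ X) :
    calX A L Q R lam X al phi = calXGain A L Q R (lam * phi) al (kalmanGain A L R al X) X := by
  have hM := hR.mul_mul_transpose_add_smul L hX hal
  rw [eq_comm, ← sub_eq_zero, calXGain_sub_calX (transpose_eq_of_nonneg hX)
    (isHermitian_iff_isSymm.1 hR.isHermitian).eq hM.isUnit]
  simp

lemma calXGain_mono {c : ℝ} (hc0 : 0 ≤ c) (hc1 : c ≤ 1) (K : Matrix (Fin nx) (Fin ny) ℝ)
    {X X' : Matrix (Fin nx) (Fin nx) ℝ} (h : X ≤ X') :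
    calXGain A L Q R c al K X ≤ calXGain A L Q R c al K X' := by
  unfold calXGain
  gcongr ?_ + _ + _
  exact add_le_add
    (smul_le_smul_of_nonneg_left (mul_mul_transpose_le_mul_mul_transpose A h) (sub_nonneg.2 hc1))
    (smul_le_smul_of_nonneg_left (mul_mul_transpose_le_mul_mul_transpose _ h) hc0)

lemma calXGain_smul_le (hQ : 0 ≤ Q) (hR : 0 ≤ R) {c : ℝ} (hc : 0 ≤ c) (hal : 0 ≤ al)
    (K : Matrix (Fin nx) (Fin ny) ℝ) (X : Matrix (Fin nx) (Fin nx) ℝ) {b : ℝ} (hb : 1 ≤ b) :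
    calXGain A L Q R c al K (b • X) ≤ b • calXGain A L Q R c al K X := by
  have h : b • calXGain A L Q R c al K X - calXGain A L Q R c al K (b • X) =
      (b - 1) • (al • Q + (c * al) • (K * R * Kᵀ)) := by
    simp only [calXGain, Matrix.mul_smul, Matrix.smul_mul]
    module
  rw [← sub_nonneg, h]
  exact smul_nonneg (sub_nonneg.2 hb) (add_nonneg (smul_nonneg hal hQ)
    (smul_nonneg (mul_nonneg hc hal) (mul_mul_transpose_nonneg K hR)))

lemma smul_le_calXGain (hR : 0 ≤ R) {c : ℝ} (hc0 : 0 ≤ c) (hc1 : c ≤ 1) (hal : 0 ≤ al)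
    (K : Matrix (Fin nx) (Fin ny) ℝ) {X : Matrix (Fin nx) (Fin nx) ℝ} (hX : 0 ≤ X) :
    al • Q ≤ calXGain A L Q R c al K X := by
  have h : calXGain A L Q R c al K X - al • Q = (1 - c) • (A * X * Aᵀ) +
      c • ((A - K * L) * X * (A - K * L)ᵀ) + (c * al) • (K * R * Kᵀ) := by
    unfold calXGain
    abel
  rw [← sub_nonneg, h]
  exact add_nonneg (add_nonneg (smul_nonneg (sub_nonneg.2 hc1) (mul_mul_transpose_nonneg A hX))
    (smul_nonneg hc0 (mul_mul_transpose_nonneg _ hX)))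
    (smul_nonneg (mul_nonneg hc0 hal) (mul_mul_transpose_nonneg K hR))

lemma calX_mono (hR : R.PosDef) (hc0 : 0 ≤ lam * phi) (hc1 : lam * phi ≤ 1) (hal : 0 < al)
    {X X' : Matrix (Fin nx) (Fin nx) ℝ} (hX : 0 ≤ X) (h : X ≤ X') :
    calX A L Q R lam X al phi ≤ calX A L Q R lam X' al phi := by
  rw [calX_eq_calXGain_kalmanGain hR hal (hX.trans h)]
  exact (calX_le_calXGain hR hc0 hal hX _).trans (calXGain_mono hc0 hc1 _ h)

lemma calX_smul_le (hQ : 0 ≤ Q) (hR : R.PosDef) (hc0 : 0 ≤ lam * phi) (hal : 0 < al)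
    {X : Matrix (Fin nx) (Fin nx) ℝ} (hX : 0 ≤ X) {b : ℝ} (hb : 1 ≤ b) :
    calX A L Q R lam (b • X) al phi ≤ b • calX A L Q R lam X al phi := by
  rw [calX_eq_calXGain_kalmanGain hR hal hX]
  exact (calX_le_calXGain hR hc0 hal (smul_nonneg (zero_le_one.trans hb) hX) _).trans
    (calXGain_smul_le hQ (nonneg_iff_posSemidef.2 hR.posSemidef) hc0 hal.le _ X hb)

lemma smul_le_calX (hR : R.PosDef) (hc0 : 0 ≤ lam * phi) (hc1 : lam * phi ≤ 1) (hal : 0 < al)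
    {X : Matrix (Fin nx) (Fin nx) ℝ} (hX : 0 ≤ X) :
    al • Q ≤ calX A L Q R lam X al phi := by
  rw [calX_eq_calXGain_kalmanGain hR hal hX]
  exact smul_le_calXGain (nonneg_iff_posSemidef.2 hR.posSemidef) hc0 hc1 hal.le _ hX

end Riccati

section Recursion

variable {ι E : Type*} [Fintype ι] [AddCommGroup E] [PartialOrder E] [IsOrderedAddMonoid E]
  [Module ℝ E] [PosSMulMono ℝ E]

def IsCoupledIteration (P : ι → ι → ℝ) (F : ℕ → ι → E → E) (Y : ℕ → ι → E) :
    Prop :=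
  ∀ k n, Y (k + 1) n = ∑ m, P m n • F k m (Y k m)

variable {P : ι → ι → ℝ} {F : ℕ → ι → E → E} {Y Y' : ℕ → ι → E}

lemma IsCoupledIteration.nonneg (hY : IsCoupledIteration P F Y) (hP : ∀ m n, 0 ≤ P m n)
    (hF : ∀ k m X, 0 ≤ X → 0 ≤ F k m X) (hY0 : ∀ m, 0 ≤ Y 0 m) :
    ∀ k m, 0 ≤ Y k m := by
  intro k
  induction k with
  | zero => exact hY0
  | succ k ih =>
    intro n
    rw [hY k n]
    exact Finset.sum_nonneg fun m _ => smul_nonneg (hP m n) (hF k m _ (ih m))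

lemma IsCoupledIteration.smul_le_succ (hY : IsCoupledIteration P F Y) (hP : ∀ m n, 0 ≤ P m n)
    (hF : ∀ k m X, 0 ≤ X → 0 ≤ F k m X) (hYnn : ∀ k m, 0 ≤ Y k m) (k : ℕ)
    (m n : ι) :
    P m n • F k m (Y k m) ≤ Y (k + 1) n := by
  rw [hY k n]
  exact Finset.single_le_sum (fun m _ => smul_nonneg (hP m n) (hF k m _ (hYnn k m)))
    (Finset.mem_univ m)

lemma IsCoupledIteration.le_smul_of_le (hY : IsCoupledIteration P F Y)
    (hY' : IsCoupledIteration P F Y') (hP : ∀ m n, 0 ≤ P m n)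
    (hmono : ∀ k m X X', 0 ≤ X → X ≤ X' → F k m X ≤ F k m X')
    (hsmul : ∀ k m X (b : ℝ), 0 ≤ X → 1 ≤ b → F k m (b • X) ≤ b • F k m X)
    (hYnn : ∀ k m, 0 ≤ Y k m) (hY'nn : ∀ k m, 0 ≤ Y' k m) {b : ℝ} (hb : 1 ≤ b)
    {k₀ : ℕ} (h₀ : ∀ m, Y' k₀ m ≤ b • Y k₀ m) :
    ∀ k, k₀ ≤ k → ∀ m, Y' k m ≤ b • Y k m := by
  intro k hk
  induction k, hk using Nat.le_induction with
  | base => exact h₀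
  | succ k _ ih =>
    intro n
    rw [hY k n, hY' k n, Finset.smul_sum]
    refine Finset.sum_le_sum fun m _ => ?_
    rw [smul_comm]
    exact smul_le_smul_of_nonneg_left ((hmono k m _ _ (hY'nn k m) (ih m)).trans
      (hsmul k m _ b (hYnn k m) hb)) (hP m n)

end Recursion

lemma exists_one_lt_forall_le_smul {ι E : Type*} [Finite ι] [AddCommGroup E] [PartialOrder E]
    [IsOrderedAddMonoid E] [Module ℝ E] [PosSMulMono ℝ E] {S Y : ι → E}
    (hY : ∀ i, 0 ≤ Y i) (h : ∀ i, ∃ t : ℝ, S i ≤ t • Y i) :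
    ∃ β : ℝ, 1 < β ∧ ∀ i, S i ≤ β • Y i := by
  choose t ht using h
  obtain ⟨M, hM⟩ := Finite.exists_le t
  refine ⟨max M 1 + 1, by linarith [le_max_right M 1], fun i => (ht i).trans ?_⟩
  exact smul_le_smul_of_nonneg_right (by linarith [hM i, le_max_left M 1]) (hY i)

theorem stmt_7_general {nx ny N : ℕ}
    (A : Matrix (Fin nx) (Fin nx) ℝ) (L : Matrix (Fin ny) (Fin nx) ℝ)
    (Q : Matrix (Fin nx) (Fin nx) ℝ) (R : Matrix (Fin ny) (Fin ny) ℝ)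
    (hQ : Q.PosDef) (hR : R.PosDef)
    (P : Matrix (Fin N) (Fin N) ℝ)
    (hPnonneg : ∀ m n, 0 ≤ P m n)
    (hPcol : ∀ n, ∃ m, 0 < P m n)
    (lam : ℝ) (hlam : lam ∈ Set.Icc (0 : ℝ) 1)
    (γ : Fin N → ℝ) (hγ : ∀ m, γ m ∈ Set.Icc (0 : ℝ) 1)
    (α : Fin N → ℕ → ℝ) (hα : ∀ m k, 0 < α m k)
    (Y Y' : ℕ → Fin N → Matrix (Fin nx) (Fin nx) ℝ)
    (hY0 : ∀ m, (Y 0 m).PosSemidef) (hY'0 : ∀ m, (Y' 0 m).PosSemidef)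
    (hYrec : ∀ k n, Y (k + 1) n = ∑ m, P m n • calX A L Q R lam (Y k m) (α m k) (γ m))
    (hY'rec : ∀ k n, Y' (k + 1) n = ∑ m, P m n • calX A L Q R lam (Y' k m) (α m k) (γ m)) :
    ∃ β : ℝ, 1 < β ∧ ∀ m, ∀ k, 1 ≤ k → loewnerLE (Y' k m) (β • Y k m) := by
  have hc0 m : 0 ≤ lam * γ m := mul_nonneg hlam.1 (hγ m).1
  have hc1 m : lam * γ m ≤ 1 := mul_le_one₀ hlam.2 (hγ m).1 (hγ m).2
  have hQnn : 0 ≤ Q := nonneg_iff_posSemidef.2 hQ.posSemidef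
  let F (k : ℕ) (m : Fin N) (X : Matrix (Fin nx) (Fin nx) ℝ) :=
    calX A L Q R lam X (α m k) (γ m)
  have hYit : IsCoupledIteration P F Y := hYrec
  have hY'it : IsCoupledIteration P F Y' := hY'rec
  have hF k m X (hX : 0 ≤ X) : α m k • Q ≤ calX A L Q R lam X (α m k) (γ m) :=
    smul_le_calX hR (hc0 m) (hc1 m) (hα m k) hX
  have hFnn k m X (hX : 0 ≤ X) := (smul_nonneg (hα m k).le hQnn).trans (hF k m X hX)
  have hYnn := hYit.nonneg hPnonneg hFnn (nonneg_iff_posSemidef.2 <| hY0 ·)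
  have hY'nn := hY'it.nonneg hPnonneg hFnn (nonneg_iff_posSemidef.2 <| hY'0 ·)
  have hY1 n : (Y 1 n).PosDef := by
    obtain ⟨m, hm⟩ := hPcol n
    refine (hQ.smul (mul_pos hm (hα m 0))).of_le ?_
    rw [mul_smul]
    exact (smul_le_smul_of_nonneg_left (hF 0 m _ (hYnn 0 m)) hm.le).trans
      (hYit.smul_le_succ hPnonneg hFnn hYnn 0 m n)
  obtain ⟨β, hβ, hβ1⟩ := exists_one_lt_forall_le_smul (hYnn 1)
    fun n => (hY1 n).exists_le_smul (nonneg_iff_posSemidef.1 (hY'nn 1 n)).isHermitian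
  refine ⟨β, hβ, fun m k hk => le_iff.1 <| hYit.le_smul_of_le hY'it hPnonneg
    (fun k m _ _ hX h => calX_mono hR (hc0 m) (hc1 m) (hα m k) hX h)
    (fun k m _ _ hX hb => calX_smul_le hQnn hR (hc0 m) (hα m k) hX hb)
    hYnn hY'nn hβ.le hβ1 k hk m⟩

theorem stmt_7 {nx ny N : ℕ} (hnx : 0 < nx) (hny : 0 < ny) (hN : 0 < N)
    (A : Matrix (Fin nx) (Fin nx) ℝ) (L : Matrix (Fin ny) (Fin nx) ℝ)
    (Q : Matrix (Fin nx) (Fin nx) ℝ) (R : Matrix (Fin ny) (Fin ny) ℝ)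
    (hQ : Q.PosDef) (hR : R.PosDef)
    (P : Matrix (Fin N) (Fin N) ℝ)
    (hPnonneg : ∀ m n, 0 ≤ P m n) (hProw : ∀ m, ∑ n, P m n = 1)
    (hPcol : ∀ n, ∃ m, 0 < P m n)
    (lam : ℝ) (hlam : lam ∈ Set.Icc (0 : ℝ) 1)
    (γ : Fin N → ℝ) (hγ : ∀ m, γ m ∈ Set.Icc (0 : ℝ) 1)
    (α : Fin N → ℕ → ℝ) (hα : ∀ m k, 0 < α m k)
    (Y Y' : ℕ → Fin N → Matrix (Fin nx) (Fin nx) ℝ)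
    (hY0 : ∀ m, (Y 0 m).PosSemidef) (hY'0 : ∀ m, (Y' 0 m).PosSemidef)
    (hYrec : ∀ k n, Y (k + 1) n = ∑ m, P m n • calX A L Q R lam (Y k m) (α m k) (γ m))
    (hY'rec : ∀ k n, Y' (k + 1) n = ∑ m, P m n • calX A L Q R lam (Y' k m) (α m k) (γ m)) :
    ∃ β : ℝ, 1 < β ∧ ∀ m, ∀ k, 1 ≤ k → loewnerLE (Y' k m) (β • Y k m) :=
  stmt_7_general A L Q R hQ hR P hPnonneg hPcol lam hlam γ hγ α hα Y Y' hY0 hY'0 hYrec hY'rec
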